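/- For any graph G, any S ⊆ V(G), any maximal matching M of G, and any integer q ≥ 2, one has |M| ≤ χ'_q(G,S) ≤ χ'_q(G) ≤ 2q·|M|. -/

import Mathlib

open Finset

variable {V : Type*}

/-- The set of colours appearing on edges incident to vertex `v`. -/
def vColors (G : SimpleGraph V) (f : V → V → ℕ) (v : V) : Set ℕ :=
  {c | ∃ u, G.Adj v u ∧ f v u = c}

/-- The set of colours used on edges of `G`. -/
def colorsOf (G : SimpleGraph V) (f : V → V → ℕ) : Set ℕ :=
  {c | ∃ u v, G.Adj u v ∧ f u v = c}

/-- An edge `q`-colouring: a symmetric assignment of colours to edges such that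
every vertex is incident with at most `q` distinct colours. -/
def IsEdgeQColoring (G : SimpleGraph V) (q : ℕ) (f : V → V → ℕ) : Prop :=
  (∀ u v, f u v = f v u) ∧ ∀ v, (vColors G f v).ncard ≤ q

/-- `S`-composability: every vertex of `S` sees at most `q - 1` non-zero colours. -/
def IsComposable (G : SimpleGraph V) (q : ℕ) (S : Set V) (f : V → V → ℕ) : Prop :=
  ∀ v ∈ S, ((vColors G f v) \ {0}).ncard ≤ q - 1

/-- `χ'_q(G, S)`: maximum number of non-zero colours of an `S`-composable edge
`q`-colouring of `G`. -/
noncomputable def chiq (G : SimpleGraph V) (q : ℕ) (S : Set V) : ℕ :=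
  sSup {k | ∃ f, IsEdgeQColoring G q f ∧ IsComposable G q S f ∧
    ((colorsOf G f) \ {0}).ncard = k}

/-- `χ'_q(G)`: maximum number of distinct colours of an edge `q`-colouring of `G`. -/
noncomputable def chimax (G : SimpleGraph V) (q : ℕ) : ℕ :=
  sSup {k | ∃ f, IsEdgeQColoring G q f ∧ (colorsOf G f).ncard = k}

/-- `M` is a matching in `G`: a set of edges, pairwise not sharing a vertex. -/
def IsMatchingSet (G : SimpleGraph V) (M : Set (Sym2 V)) : Prop :=
  M ⊆ G.edgeSet ∧ ∀ e ∈ M, ∀ e' ∈ M, e ≠ e' → ∀ v, v ∈ e → v ∉ e'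

/-- `M` is a maximal matching in `G`. -/
def IsMaximalMatchingSet (G : SimpleGraph V) (M : Set (Sym2 V)) : Prop :=
  IsMatchingSet G M ∧ ∀ e ∈ G.edgeSet, ∃ e' ∈ M, ∃ v, v ∈ e ∧ v ∈ e'

/-- `X` is a vertex cover of `G`. -/
def IsVertexCover (G : SimpleGraph V) (X : Set V) : Prop :=
  ∀ e ∈ G.edgeSet, ∃ v ∈ X, v ∈ e

/-- A layering of `G`. -/
def IsLayering (G : SimpleGraph V) (lam : V → ℤ) : Prop :=
  ∀ u v, G.Adj u v → |lam u - lam v| ≤ 1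

/-- The graph part `G_m` of the `(λ, r, m)`-stratification: delete all edges `uv`
with `λ(u) ≡ m` and `λ(v) ≡ m + 1 (mod r)`. -/
def stratGraph (G : SimpleGraph V) (lam : V → ℤ) (r m : ℤ) : SimpleGraph V where
  Adj u v := G.Adj u v ∧
    ¬ ((lam u ≡ m [ZMOD r] ∧ lam v ≡ m + 1 [ZMOD r]) ∨
       (lam v ≡ m [ZMOD r] ∧ lam u ≡ m + 1 [ZMOD r]))
  symm := ⟨by
    intro u v h
    exact ⟨h.1.symm, fun hc => h.2 hc.symm⟩⟩
  loopless := ⟨fun v h => G.loopless.irrefl v h.1⟩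

/-- The set `S_m` of the `(λ, r, m)`-stratification: vertices incident with deleted
edges. -/
def stratSet (G : SimpleGraph V) (lam : V → ℤ) (r m : ℤ) : Set V :=
  {v | ∃ u, G.Adj v u ∧ ¬ (stratGraph G lam r m).Adj v u}

/-!
Colouring each edge of a matching `M` with its own non-zero colour and every other edge with `0`
gives an `S`-composable edge `q`-colouring with `|M|` non-zero colours, since every vertex sees at
most one non-zero colour. Conversely, when `M` is maximal its `2|M|` endpoints cover every edge,
and each of them sees at most `q` colours, so no edge `q`-colouring has more than `2q|M|` colours.
-/

lemma Set.Finite.ncard_biUnion_le_mul {ι α : Type*} {t : Set ι} (ht : t.Finite)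
    {s : ι → Set α} {k : ℕ} (h : ∀ i ∈ t, (s i).ncard ≤ k) :
    (⋃ i ∈ t, s i).ncard ≤ k * t.ncard := by
  calc (⋃ i ∈ t, s i).ncard ≤ ∑ i ∈ ht.toFinset, (s i).ncard := by
        simpa using ht.toFinset.set_ncard_biUnion_le s
    _ ≤ ht.toFinset.card • k := Finset.sum_le_card_nsmul _ _ _ (by simpa using h)
    _ = k * t.ncard := by rw [smul_eq_mul, mul_comm, Set.ncard_eq_toFinset_card t ht]

lemma Sym2.ncard_coe_le_two {α : Type*} (e : Sym2 α) : (e : Set α).ncard ≤ 2 := by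
  induction e using Sym2.ind with
  | _ a b => simpa using Set.ncard_insert_le a {b}

lemma vColors_finite [Finite V] (G : SimpleGraph V) (f : V → V → ℕ) (v : V) :
    (vColors G f v).Finite :=
  (Set.finite_range (f v)).subset (by rintro c ⟨u, -, rfl⟩; exact ⟨u, rfl⟩)

lemma colorsOf_subset_range (G : SimpleGraph V) (f : V → V → ℕ) :
    colorsOf G f ⊆ Set.range fun p : V × V => f p.1 p.2 := by
  rintro c ⟨u, v, -, rfl⟩
  exact ⟨(u, v), rfl⟩

lemma colorsOf_finite [Finite V] (G : SimpleGraph V) (f : V → V → ℕ) : (colorsOf G f).Finite :=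
  (Set.finite_range _).subset (colorsOf_subset_range G f)

lemma ncard_colorsOf_le [Finite V] (G : SimpleGraph V) (f : V → V → ℕ) :
    (colorsOf G f).ncard ≤ Nat.card (V × V) :=
  calc (colorsOf G f).ncard ≤ (Set.range fun p : V × V => f p.1 p.2).ncard :=
        Set.ncard_le_ncard (colorsOf_subset_range G f)
    _ = Nat.card (Set.range fun p : V × V => f p.1 p.2) := (Nat.card_coe_set_eq _).symm
    _ ≤ Nat.card (V × V) := Finite.card_range_le _

section Colourings

variable {G : SimpleGraph V} {q : ℕ} {S : Set V}

lemma IsEdgeQColoring.ncard_colorsOf_le_chimax [Finite V] {f : V → V → ℕ}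
    (hf : IsEdgeQColoring G q f) : (colorsOf G f).ncard ≤ chimax G q :=
  le_csSup ⟨_, by rintro _ ⟨g, -, rfl⟩; exact ncard_colorsOf_le G g⟩ ⟨f, hf, rfl⟩

lemma IsEdgeQColoring.ncard_colorsOf_sdiff_zero_le_chiq [Finite V] {f : V → V → ℕ}
    (hf : IsEdgeQColoring G q f) (hS : IsComposable G q S f) :
    (colorsOf G f \ {0}).ncard ≤ chiq G q S := by
  refine le_csSup ⟨Nat.card (V × V), ?_⟩ ⟨f, hf, hS, rfl⟩
  rintro _ ⟨g, -, -, rfl⟩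
  exact (Set.ncard_le_ncard Set.sdiff_subset (colorsOf_finite G g)).trans (ncard_colorsOf_le G g)

lemma chiq_le_chimax [Finite V] : chiq G q S ≤ chimax G q := by
  refine csSup_le' ?_
  rintro _ ⟨f, hf, -, rfl⟩
  exact (Set.ncard_le_ncard Set.sdiff_subset (colorsOf_finite G f)).trans
    hf.ncard_colorsOf_le_chimax

lemma colorsOf_subset_biUnion_vColors {f : V → V → ℕ} (hf : ∀ u v, f u v = f v u) {X : Set V}
    (hX : IsVertexCover G X) : colorsOf G f ⊆ ⋃ v ∈ X, vColors G f v := by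
  rintro _ ⟨u, v, huv, rfl⟩
  obtain ⟨w, hwX, hw⟩ := hX s(u, v) huv
  refine Set.mem_biUnion hwX ?_
  rcases Sym2.mem_iff.1 hw with rfl | rfl
  · exact ⟨v, huv, rfl⟩
  · exact ⟨u, huv.symm, hf w u⟩

lemma chimax_le_of_isVertexCover [Finite V] {X : Set V} (hX : IsVertexCover G X) :
    chimax G q ≤ q * X.ncard := by
  refine csSup_le' ?_
  rintro _ ⟨f, ⟨hsymm, hq⟩, rfl⟩
  calc (colorsOf G f).ncard ≤ (⋃ v ∈ X, vColors G f v).ncard :=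
        Set.ncard_le_ncard (colorsOf_subset_biUnion_vColors hsymm hX)
          (X.toFinite.biUnion fun v _ => vColors_finite G f v)
    _ ≤ q * X.ncard := X.toFinite.ncard_biUnion_le_mul fun v _ => hq v

end Colourings

lemma vColors_indicator_sdiff_zero_subset (G : SimpleGraph V) (M : Set (Sym2 V))
    (c : Sym2 V → ℕ) (v : V) :
    vColors G (fun x y => M.indicator c s(x, y)) v \ {0} ⊆ c '' {e ∈ M | v ∈ e} := by
  rintro _ ⟨⟨u, -, rfl⟩, hne⟩
  have hmem : s(v, u) ∈ M := Set.mem_of_indicator_ne_zero hne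
  exact ⟨s(v, u), ⟨hmem, Sym2.mem_mk_left v u⟩, (Set.indicator_of_mem hmem c).symm⟩

section Matchings

variable {G : SimpleGraph V} {M : Set (Sym2 V)}

lemma IsMatchingSet.subsingleton_incident (hM : IsMatchingSet G M) (v : V) :
    {e ∈ M | v ∈ e}.Subsingleton := by
  rintro e ⟨he, hve⟩ e' ⟨he', hve'⟩
  by_contra hne
  exact hM.2 e he e' he' hne v hve hve'

lemma colorsOf_indicator_sdiff_zero (hMG : M ⊆ G.edgeSet) {c : Sym2 V → ℕ} (hc : ∀ e, c e ≠ 0) :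
    colorsOf G (fun x y => M.indicator c s(x, y)) \ {0} = c '' M := by
  ext k
  constructor
  · rintro ⟨⟨u, v, -, rfl⟩, hne⟩
    have hmem : s(u, v) ∈ M := Set.mem_of_indicator_ne_zero hne
    exact ⟨s(u, v), hmem, (Set.indicator_of_mem hmem c).symm⟩
  · rintro ⟨e, he, rfl⟩
    induction e using Sym2.ind with
    | _ u v => exact ⟨⟨u, v, hMG he, Set.indicator_of_mem he c⟩, hc _⟩

lemma le_chiq_of_isMatchingSet [Finite V] (hM : IsMatchingSet G M) {q : ℕ} (hq : 2 ≤ q)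
    (S : Set V) : M.ncard ≤ chiq G q S := by
  obtain ⟨c, hc⟩ := Countable.exists_injective_nat (Sym2 V)
  set f : V → V → ℕ := fun x y => M.indicator (Nat.succ ∘ c) s(x, y)
  have hnonzero (v : V) : (vColors G f v \ {0}).ncard ≤ 1 :=
    calc (vColors G f v \ {0}).ncard ≤ (Nat.succ ∘ c '' {e ∈ M | v ∈ e}).ncard :=
          Set.ncard_le_ncard (vColors_indicator_sdiff_zero_subset G M _ v)
      _ ≤ {e ∈ M | v ∈ e}.ncard := Set.ncard_image_le
      _ ≤ 1 := Set.ncard_le_one_iff_subsingleton.2 (hM.subsingleton_incident v)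
  have hcol : IsEdgeQColoring G q f := by
    refine ⟨fun x y => by simp only [f, Sym2.eq_swap], fun v => ?_⟩
    calc (vColors G f v).ncard ≤ (vColors G f v \ {0}).ncard + ({0} : Set ℕ).ncard :=
          Set.ncard_le_ncard_sdiff_add_ncard _ _
      _ ≤ q := by rw [Set.ncard_singleton]; linarith [hnonzero v]
  have hcomp : IsComposable G q S f := fun v _ => (hnonzero v).trans (by omega)
  have hcolors : colorsOf G f \ {0} = Nat.succ ∘ c '' M :=
    colorsOf_indicator_sdiff_zero hM.1 fun e => Nat.succ_ne_zero (c e)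
  calc M.ncard = (Nat.succ ∘ c '' M).ncard :=
        (Set.ncard_image_of_injective M (Nat.succ_injective.comp hc)).symm
    _ = (colorsOf G f \ {0}).ncard := by rw [hcolors]
    _ ≤ chiq G q S := hcol.ncard_colorsOf_sdiff_zero_le_chiq hcomp

lemma IsMaximalMatchingSet.isVertexCover (hM : IsMaximalMatchingSet G M) :
    IsVertexCover G (⋃ e ∈ M, (e : Set V)) := by
  intro e he
  obtain ⟨e', he', v, hve, hve'⟩ := hM.2 e he
  exact ⟨v, Set.mem_biUnion he' hve', hve⟩

lemma ncard_biUnion_coe_le [Finite V] (M : Set (Sym2 V)) :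
    (⋃ e ∈ M, (e : Set V)).ncard ≤ 2 * M.ncard :=
  M.toFinite.ncard_biUnion_le_mul fun e _ => e.ncard_coe_le_two

end Matchings

/-- for a maximal matching `M` and `q ≥ 2`,
`|M| ≤ χ'_q(G,S) ≤ χ'_q(G) ≤ 2q|M|`. -/
theorem stmt1 [Fintype V] (G : SimpleGraph V) (S : Set V) (M : Set (Sym2 V))
    (hM : IsMaximalMatchingSet G M) (q : ℕ) (hq : 2 ≤ q) :
    M.ncard ≤ chiq G q S ∧ chiq G q S ≤ chimax G q ∧ chimax G q ≤ 2 * q * M.ncard := by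
  refine ⟨le_chiq_of_isMatchingSet hM.1 hq S, chiq_le_chimax, ?_⟩
  calc chimax G q ≤ q * (⋃ e ∈ M, (e : Set V)).ncard :=
        chimax_le_of_isVertexCover hM.isVertexCover
    _ ≤ q * (2 * M.ncard) := Nat.mul_le_mul_left q (ncard_biUnion_coe_le M)
    _ = 2 * q * M.ncard := by ring
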